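/- Hedberg-type inequality with generalized Morrey kernel norm: under the hypotheses of Theorem on σ, φ (σ doubling, σ(r) ≤ Cr^{-α}, K_{α,γ} ∈ L^{s,σ}, φ(r) ≤ Cr^β with -n/p₁ < β < -α, 1 < p₁ < n/α, 1 ≤ s < n/(n-α)), there is C' such that for every f ∈ L^{p₁,φ} and x ∈ ℝ^n, |I_{α,γ}f(x)| ≤ C' ‖K_{α,γ}‖_{L^{s,σ}} ‖f‖_{L^{p₁,φ}}^{(α-n)/β} (Mf(x))^{1+(n-α)/β}. -/

import Mathlib

/-!
Hedberg's argument. Since `K_{α,γ}` is radially nonincreasing, a finite `L^{s,σ}` norm forces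
the decay `K_{α,γ}(r) ≲ ‖K_{α,γ}‖_{L^{s,σ}} σ(r) ≲ ‖K_{α,γ}‖_{L^{s,σ}} r^{-α}`, and with it
`n ≤ 2α`. Cut `ℝⁿ \ {x}` into the dyadic annuli `R 2^k ≤ |x - y| < R 2^{k+1}`, `k ∈ ℤ`. On the
inner ones (`k < 0`) use `∫_{B(x,r)} |f| ≤ Mf(x) |B(x,r)|`, on the outer ones Hölder's inequality
and the Morrey condition, `∫_{B(x,r)} |f| ≲ ‖f‖_{L^{p,φ}} r^{n+β}`. Both give geometric series,
convergent because `n - α > 0 > n - α + β`, so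
`|I_{α,γ}f(x)| ≲ ‖K_{α,γ}‖ (Mf(x) R^{n-α} + ‖f‖ R^{n-α+β})`, and `R = (Mf(x)/‖f‖)^{1/β}` balances
the two terms.
-/

open MeasureTheory Metric ENNReal

noncomputable section

abbrev En (n : ℕ) := EuclideanSpace ℝ (Fin n)

/-- The Bessel-Riesz kernel `K_{α,γ}(x) = |x|^{α-n}/(1+|x|)^γ`. -/
def brKernel (n : ℕ) (α γ : ℝ) (x : En n) : ℝ :=
  ‖x‖ ^ (α - n) / (1 + ‖x‖) ^ γ

/-- The Bessel-Riesz operator `I_{α,γ} f(x) = ∫ K_{α,γ}(x-y) f(y) dy`. -/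
def brOp (n : ℕ) (α γ : ℝ) (f : En n → ℝ) (x : En n) : ℝ :=
  ∫ y, brKernel n α γ (x - y) * f y

/-- The Hardy-Littlewood maximal function (sup over balls containing `x`). -/
def maximalFn (n : ℕ) (f : En n → ℝ) (x : En n) : ℝ≥0∞ :=
  ⨆ (a : En n) (r : ℝ) (_ : 0 < r) (_ : x ∈ ball a r),
    (volume (ball a r))⁻¹ * ∫⁻ y in ball a r, ENNReal.ofReal |f y|

/-- The classical Morrey norm `‖f‖_{L^{p,q}}`. -/
def morreyNorm (n : ℕ) (p q : ℝ) (f : En n → ℝ) : ℝ≥0∞ :=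
  ⨆ (r : ℝ) (_ : 0 < r) (a : En n),
    ENNReal.ofReal (r ^ ((n : ℝ) * (1 / q - 1 / p))) *
      (∫⁻ x in ball a r, ENNReal.ofReal (|f x| ^ p)) ^ (1 / p)

/-- The generalized Morrey norm `‖f‖_{L^{p,φ}}`. -/
def gMorreyNorm (n : ℕ) (p : ℝ) (φ : ℝ → ℝ) (f : En n → ℝ) : ℝ≥0∞ :=
  ⨆ (r : ℝ) (_ : 0 < r) (a : En n),
    (ENNReal.ofReal (φ r))⁻¹ *
      (((ENNReal.ofReal r) ^ (n : ℝ))⁻¹ *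
        ∫⁻ x in ball a r, ENNReal.ofReal (|f x| ^ p)) ^ (1 / p)

/-- The generalized Morrey norm for `ℝ≥0∞`-valued functions. -/
def gMorreyNormE (n : ℕ) (p : ℝ) (φ : ℝ → ℝ) (g : En n → ℝ≥0∞) : ℝ≥0∞ :=
  ⨆ (r : ℝ) (_ : 0 < r) (a : En n),
    (ENNReal.ofReal (φ r))⁻¹ *
      (((ENNReal.ofReal r) ^ (n : ℝ))⁻¹ * ∫⁻ x in ball a r, (g x) ^ p) ^ (1 / p)

open Set

def brRadial (n : ℕ) (α γ t : ℝ) : ℝ := t ^ (α - n) / (1 + t) ^ γ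

section Kernel

variable {n : ℕ} {α γ : ℝ}

lemma brKernel_eq_brRadial (y : En n) : brKernel n α γ y = brRadial n α γ ‖y‖ := rfl

lemma brRadial_pos {t : ℝ} (ht : 0 < t) : 0 < brRadial n α γ t := by
  unfold brRadial; positivity

lemma brRadial_nonneg {t : ℝ} (ht : 0 ≤ t) : 0 ≤ brRadial n α γ t := by
  unfold brRadial; positivity

lemma brKernel_nonneg (y : En n) : 0 ≤ brKernel n α γ y := brRadial_nonneg (norm_nonneg y)

lemma brRadial_antitoneOn (hαn : α ≤ n) (hγ : 0 ≤ γ) : AntitoneOn (brRadial n α γ) (Ioi 0) := by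
  intro u (hu : 0 < u) v (hv : 0 < v) huv
  exact div_le_div₀ (by positivity) (Real.rpow_le_rpow_of_nonpos hu huv (by linarith))
    (by positivity) (Real.rpow_le_rpow (by linarith) (by linarith) hγ)

/-- Near the origin `K_{α,γ}(r) ≈ r^{α-n}`, so a bound `O(r^{-α})` forces `α - n ≥ -α`. -/
lemma natCast_le_two_mul_of_brRadial_le (hγ : 0 ≤ γ) {c : ℝ}
    (hK : ∀ r, 0 < r → brRadial n α γ r ≤ c * r ^ (-α)) : (n : ℝ) ≤ 2 * α := by
  by_contra! h
  have hsmall : ∀ r, 0 < r → r ≤ 1 → r ^ (2 * α - n) ≤ c * 2 ^ γ := by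
    intro r hr hr1
    have h1 : r ^ (α - n) ≤ c * r ^ (-α) * 2 ^ γ := by
      calc r ^ (α - n) = brRadial n α γ r * (1 + r) ^ γ := by
            unfold brRadial; field_simp
        _ ≤ c * r ^ (-α) * 2 ^ γ := by
            gcongr
            · exact (brRadial_nonneg hr.le).trans (hK r hr)
            · exact hK r hr
            · linarith
    calc r ^ (2 * α - n) = r ^ (α - n) * r ^ α := by rw [← Real.rpow_add hr]; ring_nf
      _ ≤ c * r ^ (-α) * 2 ^ γ * r ^ α := by gcongr
      _ = c * 2 ^ γ := by
          rw [mul_right_comm, mul_assoc c, ← Real.rpow_add hr, neg_add_cancel, Real.rpow_zero,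
            mul_one]
  have hlim := tendsto_rpow_neg_nhdsGT_zero (y := 2 * α - n) (by linarith)
  obtain ⟨r, hbig, hr, hr1⟩ := ((hlim.eventually_gt_atTop (c * 2 ^ γ)).and
    (Ioc_mem_nhdsGT zero_lt_one)).exists
  exact (hsmall r hr hr1).not_gt hbig

end Kernel

lemma lintegral_le_lintegral_rpow_mul_measure_univ {X : Type*} [MeasurableSpace X] (μ : Measure X)
    {p : ℝ} (hp : 1 < p) (g : X → ℝ≥0∞) :
    ∫⁻ a, g a ∂μ ≤ (∫⁻ a, g a ^ p ∂μ) ^ (1 / p) * μ univ ^ (1 - 1 / p) := by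
  obtain ⟨h, hmeas, hle, heq⟩ := exists_measurable_le_lintegral_eq μ g
  have hpq := Real.HolderConjugate.conjExponent hp
  have hq : 1 / p.conjExponent = 1 - 1 / p := by
    rw [eq_sub_iff_add_eq, add_comm, one_div, one_div, hpq.inv_add_inv_eq_one]
  have holder := ENNReal.lintegral_mul_le_Lp_mul_Lq μ hpq hmeas.aemeasurable
    (aemeasurable_const (b := 1))
  simp only [Pi.mul_apply, mul_one, ENNReal.one_rpow, lintegral_const, one_mul, hq] at holder
  calc ∫⁻ a, g a ∂μ = ∫⁻ a, h a ∂μ := heq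
    _ ≤ _ := holder
    _ ≤ _ := by gcongr with a; exact hle a

section Morrey

variable {n : ℕ} {p : ℝ} {φ : ℝ → ℝ} {f : En n → ℝ}

lemma volume_ball_eq_rpow_mul (a : En n) {r : ℝ} (hr : 0 < r) :
    volume (ball a r) = ENNReal.ofReal r ^ (n : ℝ) * volume (ball (0 : En n) 1) := by
  rw [Measure.addHaar_ball_of_pos _ _ hr, finrank_euclideanSpace_fin, ENNReal.ofReal_rpow_of_pos hr,
    Real.rpow_natCast]

lemma rpow_ballAverage_le_gMorreyNorm (hf : gMorreyNorm n p φ f ≠ ⊤) (a : En n) {r : ℝ}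
    (hr : 0 < r) :
    ((ENNReal.ofReal r ^ (n : ℝ))⁻¹ * ∫⁻ x in ball a r, ENNReal.ofReal (|f x| ^ p)) ^ (1 / p) ≤
      ENNReal.ofReal (φ r) * gMorreyNorm n p φ f := by
  have hle : (ENNReal.ofReal (φ r))⁻¹ *
      ((ENNReal.ofReal r ^ (n : ℝ))⁻¹ * ∫⁻ x in ball a r, ENNReal.ofReal (|f x| ^ p)) ^ (1 / p) ≤
        gMorreyNorm n p φ f :=
    le_iSup_of_le r (le_iSup_of_le hr (le_iSup_of_le a le_rfl))
  by_cases hφ : ENNReal.ofReal (φ r) = 0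
  · -- a nonzero average would make the norm infinite
    rw [hφ, ENNReal.inv_zero] at hle
    rw [hφ, zero_mul, nonpos_iff_eq_zero]
    by_contra h
    exact hf (top_le_iff.mp (ENNReal.top_mul h ▸ hle))
  · rwa [← ENNReal.inv_mul_le_iff hφ ENNReal.ofReal_ne_top]

lemma setLIntegral_abs_le_maximalFn_mul (x : En n) {r : ℝ} (hr : 0 < r) :
    ∫⁻ y in ball x r, ENNReal.ofReal |f y| ≤ maximalFn n f x * volume (ball x r) := by
  have hle : (volume (ball x r))⁻¹ * ∫⁻ y in ball x r, ENNReal.ofReal |f y| ≤ maximalFn n f x :=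
    le_iSup_of_le x (le_iSup_of_le r (le_iSup_of_le hr (le_iSup_of_le (mem_ball_self hr) le_rfl)))
  rwa [mul_comm, ← ENNReal.inv_mul_le_iff (measure_ball_pos _ _ hr).ne' measure_ball_lt_top.ne]

lemma setLIntegral_abs_le_gMorreyNorm (hp : 1 < p) (hf : gMorreyNorm n p φ f ≠ ⊤) {Cφ β : ℝ}
    (hφ : ∀ r, 0 < r → φ r ≤ Cφ * r ^ β) (x : En n) {r : ℝ} (hr : 0 < r) :
    ∫⁻ y in ball x r, ENNReal.ofReal |f y| ≤ ENNReal.ofReal Cφ *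
      volume (ball (0 : En n) 1) ^ (1 - 1 / p) * gMorreyNorm n p φ f *
        ENNReal.ofReal r ^ ((n : ℝ) + β) := by
  have hp0 : 0 < p := by linarith
  have hp1 : 0 ≤ 1 - 1 / p := by rw [sub_nonneg, div_le_one hp0]; exact hp.le
  set B := ENNReal.ofReal r ^ (n : ℝ)
  have hB0 : B ≠ 0 := by positivity
  have hBt : B ≠ ⊤ := by simp [B]
  set J := ∫⁻ y in ball x r, ENNReal.ofReal (|f y| ^ p)
  have hJ : ∫⁻ y in ball x r, ENNReal.ofReal |f y| ^ p = B * (B⁻¹ * J) := by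
    rw [ENNReal.mul_inv_cancel_left hB0 hBt]
    exact setLIntegral_congr_fun measurableSet_ball fun y _ =>
      ENNReal.ofReal_rpow_of_nonneg (abs_nonneg _) hp0.le
  calc ∫⁻ y in ball x r, ENNReal.ofReal |f y|
      ≤ (∫⁻ y in ball x r, ENNReal.ofReal |f y| ^ p) ^ (1 / p) *
          volume (ball x r) ^ (1 - 1 / p) := by
        simpa using lintegral_le_lintegral_rpow_mul_measure_univ (volume.restrict (ball x r)) hp
          (fun y => ENNReal.ofReal |f y|)
    _ = B * volume (ball (0 : En n) 1) ^ (1 - 1 / p) * (B⁻¹ * J) ^ (1 / p) := by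
        rw [hJ, volume_ball_eq_rpow_mul x hr, ENNReal.mul_rpow_of_nonneg _ _ (by positivity),
          ENNReal.mul_rpow_of_nonneg _ _ hp1]
        have hsplit : B ^ (1 / p) * B ^ (1 - 1 / p) = B := by
          rw [← ENNReal.rpow_add _ _ hB0 hBt, add_sub_cancel, ENNReal.rpow_one]
        calc _ = B ^ (1 / p) * B ^ (1 - 1 / p) * volume (ball (0 : En n) 1) ^ (1 - 1 / p) *
              (B⁻¹ * J) ^ (1 / p) := by ring
          _ = _ := by rw [hsplit]
    _ ≤ B * volume (ball (0 : En n) 1) ^ (1 - 1 / p) *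
          (ENNReal.ofReal (φ r) * gMorreyNorm n p φ f) := by
        gcongr; exact rpow_ballAverage_le_gMorreyNorm hf x hr
    _ ≤ B * volume (ball (0 : En n) 1) ^ (1 - 1 / p) *
          (ENNReal.ofReal Cφ * ENNReal.ofReal r ^ β * gMorreyNorm n p φ f) := by
        gcongr
        rw [ENNReal.ofReal_rpow_of_pos hr, ← ENNReal.ofReal_mul' (by positivity)]
        exact ENNReal.ofReal_le_ofReal (hφ r hr)
    _ = _ := by
        rw [ENNReal.rpow_add _ _ (by positivity) (by simp)]
        ring

end Morrey

section KernelNorm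

variable {n : ℕ} [NeZero n] {α γ s : ℝ} {σ : ℝ → ℝ}

/-- `K_{α,γ}` is radially nonincreasing, so its `s`-th power averages at least `K_{α,γ}(r)^s`
over `B(0, r)`. -/
lemma ofReal_brRadial_mul_le_gMorreyNorm (hs : 0 < s) (hαn : α ≤ n) (hγ : 0 ≤ γ)
    (hK : gMorreyNorm n s σ (brKernel n α γ) ≠ ⊤) {r : ℝ} (hr : 0 < r) :
    ENNReal.ofReal (brRadial n α γ r) * volume (ball (0 : En n) 1) ^ (1 / s) ≤
      ENNReal.ofReal (σ r) * gMorreyNorm n s σ (brKernel n α γ) := by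
  set v := volume (ball (0 : En n) 1)
  have hmin : ENNReal.ofReal (brRadial n α γ r ^ s) * volume (ball (0 : En n) r) ≤
      ∫⁻ y in ball (0 : En n) r, ENNReal.ofReal (|brKernel n α γ y| ^ s) := by
    rw [← setLIntegral_const]
    refine lintegral_mono_ae ?_
    filter_upwards [ae_restrict_mem measurableSet_ball,
      ae_restrict_of_ae (Measure.ae_ne volume 0)] with y hy hy0
    have hyr : ‖y‖ ≤ r := by simpa using (mem_ball.mp hy).le
    rw [abs_of_nonneg (brKernel_nonneg y), brKernel_eq_brRadial]
    gcongr
    · exact brRadial_nonneg hr.le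
    · exact brRadial_antitoneOn hαn hγ (norm_pos_iff.mpr hy0) hr hyr
  have hrn : ENNReal.ofReal r ^ (n : ℝ) ≠ 0 := by positivity
  have havg : ENNReal.ofReal (brRadial n α γ r ^ s) * v ≤
      (ENNReal.ofReal r ^ (n : ℝ))⁻¹ *
        ∫⁻ y in ball (0 : En n) r, ENNReal.ofReal (|brKernel n α γ y| ^ s) := by
    rw [volume_ball_eq_rpow_mul _ hr, mul_left_comm] at hmin
    exact (ENNReal.mul_le_iff_le_inv hrn (by simp)).mp hmin
  calc ENNReal.ofReal (brRadial n α γ r) * v ^ (1 / s)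
      = (ENNReal.ofReal (brRadial n α γ r ^ s) * v) ^ (1 / s) := by
        rw [ENNReal.mul_rpow_of_nonneg _ _ (by positivity),
          ← ENNReal.ofReal_rpow_of_pos (brRadial_pos hr), ← ENNReal.rpow_mul,
          mul_one_div_cancel hs.ne', ENNReal.rpow_one]
    _ ≤ _ := by gcongr
    _ ≤ _ := rpow_ballAverage_le_gMorreyNorm hK 0 hr

lemma exists_ofReal_brRadial_le (hs : 0 < s) (hαn : α ≤ n) (hγ : 0 ≤ γ) {Cσ : ℝ}
    (hCσ : 0 < Cσ) (hσ : ∀ r, 0 < r → σ r ≤ Cσ * r ^ (-α))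
    (hK : gMorreyNorm n s σ (brKernel n α γ) ≠ ⊤) :
    ∃ e > 0, ∀ r, 0 < r → ENNReal.ofReal (brRadial n α γ r) ≤
      ENNReal.ofReal e * gMorreyNorm n s σ (brKernel n α γ) * ENNReal.ofReal r ^ (-α) := by
  set w := volume (ball (0 : En n) 1) ^ (1 / s)
  have hw0 : w ≠ 0 := (ENNReal.rpow_pos (measure_ball_pos _ _ one_pos) measure_ball_lt_top.ne).ne'
  have hwt : w ≠ ⊤ := ENNReal.rpow_ne_top_of_nonneg (by positivity) measure_ball_lt_top.ne
  have hw' : 0 < w⁻¹.toReal :=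
    ENNReal.toReal_pos (ENNReal.inv_ne_zero.mpr hwt) (ENNReal.inv_ne_top.mpr hw0)
  refine ⟨Cσ * w⁻¹.toReal, by positivity, fun r hr => ?_⟩
  calc ENNReal.ofReal (brRadial n α γ r)
      = ENNReal.ofReal (brRadial n α γ r) * w * w⁻¹ := (ENNReal.mul_inv_cancel_right hw0 hwt).symm
    _ ≤ ENNReal.ofReal (σ r) * gMorreyNorm n s σ (brKernel n α γ) * w⁻¹ := by
        gcongr ?_ * _; exact ofReal_brRadial_mul_le_gMorreyNorm hs hαn hγ hK hr
    _ ≤ ENNReal.ofReal (Cσ * r ^ (-α)) * gMorreyNorm n s σ (brKernel n α γ) * w⁻¹ := by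
        gcongr; exact hσ r hr
    _ = _ := by
        rw [ENNReal.ofReal_mul hCσ.le, ENNReal.ofReal_mul hCσ.le,
          ENNReal.ofReal_toReal (ENNReal.inv_ne_top.mpr hw0), ENNReal.ofReal_rpow_of_pos hr]
        ring

lemma natCast_le_two_mul_of_gMorreyNorm_brKernel_ne_top (hs : 0 < s) (hαn : α ≤ n)
    (hγ : 0 ≤ γ) {Cσ : ℝ} (hCσ : 0 < Cσ) (hσ : ∀ r, 0 < r → σ r ≤ Cσ * r ^ (-α))
    (hK : gMorreyNorm n s σ (brKernel n α γ) ≠ ⊤) : (n : ℝ) ≤ 2 * α := by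
  obtain ⟨e, he, hdecay⟩ := exists_ofReal_brRadial_le hs hαn hγ hCσ hσ hK
  refine natCast_le_two_mul_of_brRadial_le hγ (c := e * (gMorreyNorm n s σ (brKernel n α γ)).toReal)
    fun r hr => ?_
  have := hdecay r hr
  rwa [ENNReal.ofReal_rpow_of_pos hr, ← ENNReal.ofReal_toReal hK, ← ENNReal.ofReal_mul he.le,
    ← ENNReal.ofReal_mul (by positivity), ENNReal.ofReal_le_ofReal_iff (by positivity)] at this

end KernelNorm

section Dyadic

variable {X : Type*} [MetricSpace X]

def dyadicAnnulus (x : X) (ρ : ℝ) : Set X := ball x (2 * ρ) \ ball x ρ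

lemma compl_singleton_subset_iUnion_dyadicAnnulus (x : X) {R : ℝ} (hR : 0 < R) :
    {x}ᶜ ⊆ ⋃ k : ℤ, dyadicAnnulus x (R * 2 ^ k) := by
  intro y hy
  obtain ⟨k, hk1, hk2⟩ := exists_mem_Ico_zpow (div_pos (dist_pos.mpr hy) hR) one_lt_two
  rw [le_div_iff₀ hR, mul_comm] at hk1
  rw [div_lt_iff₀ hR, zpow_add_one₀ two_ne_zero] at hk2
  exact mem_iUnion.mpr ⟨k, by rw [mem_ball]; linarith, by rw [mem_ball, not_lt]; exact hk1⟩

lemma lintegral_le_tsum_dyadicAnnulus [MeasurableSpace X] (μ : Measure X) [NullSingletonClass μ]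
    (F : X → ℝ≥0∞) (x : X) {R : ℝ} (hR : 0 < R) :
    ∫⁻ y, F y ∂μ ≤ (∑' j : ℕ, ∫⁻ y in dyadicAnnulus x (R * 2 ^ j), F y ∂μ) +
      ∑' j : ℕ, ∫⁻ y in dyadicAnnulus x (R * 2⁻¹ * 2⁻¹ ^ j), F y ∂μ := by
  calc ∫⁻ y, F y ∂μ = ∫⁻ y in {x}ᶜ, F y ∂μ := by rw [restrict_compl_singleton]
    _ ≤ ∫⁻ y in ⋃ k : ℤ, dyadicAnnulus x (R * 2 ^ k), F y ∂μ :=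
        lintegral_mono_set (compl_singleton_subset_iUnion_dyadicAnnulus x hR)
    _ ≤ ∑' k : ℤ, ∫⁻ y in dyadicAnnulus x (R * 2 ^ k), F y ∂μ := lintegral_iUnion_le _ _
    _ = _ := by
        rw [tsum_of_nat_of_neg_add_one ENNReal.summable ENNReal.summable]
        simp only [zpow_natCast, zpow_neg, ← Int.natCast_succ, pow_succ', mul_inv, inv_pow,
          mul_assoc]

end Dyadic

lemma ENNReal.tsum_ofReal_mul_pow_rpow {R t : ℝ} (hR : 0 < R) (ht : 0 < t) (κ : ℝ) :
    ∑' j : ℕ, ENNReal.ofReal (R * t ^ j) ^ κ =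
      ENNReal.ofReal R ^ κ * (1 - ENNReal.ofReal t ^ κ)⁻¹ := by
  have hterm : ∀ j : ℕ, ENNReal.ofReal (R * t ^ j) ^ κ =
      ENNReal.ofReal R ^ κ * (ENNReal.ofReal t ^ κ) ^ j := fun j => by
    rw [ENNReal.ofReal_mul hR.le, ENNReal.ofReal_pow ht.le,
      ENNReal.mul_rpow_of_ne_zero (by positivity) (by positivity), ← ENNReal.rpow_natCast_mul,
      mul_comm (j : ℝ), ENNReal.rpow_mul_natCast]
  simp_rw [hterm, ENNReal.tsum_mul_left, ENNReal.tsum_geometric]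

section Hedberg

variable {n : ℕ} {α γ : ℝ} {f : En n → ℝ}

lemma setLIntegral_dyadicAnnulus_brKernel_mul_le (hαn : α ≤ n) (hγ : 0 ≤ γ) (x : En n) {ρ : ℝ}
    (hρ : 0 < ρ) :
    ∫⁻ y in dyadicAnnulus x ρ, ENNReal.ofReal (brKernel n α γ (x - y)) * ENNReal.ofReal |f y| ≤
      ENNReal.ofReal (brRadial n α γ ρ) * ∫⁻ y in ball x (2 * ρ), ENNReal.ofReal |f y| := by
  calc _ ≤ ∫⁻ y in dyadicAnnulus x ρ,
        ENNReal.ofReal (brRadial n α γ ρ) * ENNReal.ofReal |f y| := by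
        refine lintegral_mono_ae ?_
        filter_upwards [ae_restrict_mem (measurableSet_ball.diff measurableSet_ball)] with y hy
        have hρy : ρ ≤ ‖x - y‖ := by
          rw [← dist_eq_norm, dist_comm]; simpa using hy.2
        gcongr
        exact brRadial_antitoneOn hαn hγ hρ (hρ.trans_le hρy) hρy
    _ = ENNReal.ofReal (brRadial n α γ ρ) * ∫⁻ y in dyadicAnnulus x ρ, ENNReal.ofReal |f y| :=
        lintegral_const_mul' _ _ ENNReal.ofReal_ne_top
    _ ≤ _ := by gcongr; exact sdiff_subset

lemma tsum_setLIntegral_dyadicAnnulus_brKernel_mul_le (hαn : α ≤ n) (hγ : 0 ≤ γ) {cK : ℝ≥0∞}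
    (hdecay : ∀ r, 0 < r → ENNReal.ofReal (brRadial n α γ r) ≤ cK * ENNReal.ofReal r ^ (-α))
    (x : En n) {B : ℝ≥0∞} {ν : ℝ}
    (hf : ∀ r, 0 < r → ∫⁻ y in ball x r, ENNReal.ofReal |f y| ≤ B * ENNReal.ofReal r ^ ν)
    {R t : ℝ} (hR : 0 < R) (ht : 0 < t) :
    ∑' j : ℕ, ∫⁻ y in dyadicAnnulus x (R * t ^ j),
        ENNReal.ofReal (brKernel n α γ (x - y)) * ENNReal.ofReal |f y| ≤
      cK * B * 2 ^ ν * (ENNReal.ofReal R ^ (ν - α) * (1 - ENNReal.ofReal t ^ (ν - α))⁻¹) := by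
  have hterm : ∀ ρ, 0 < ρ → ∫⁻ y in dyadicAnnulus x ρ,
      ENNReal.ofReal (brKernel n α γ (x - y)) * ENNReal.ofReal |f y| ≤
        cK * B * 2 ^ ν * ENNReal.ofReal ρ ^ (ν - α) := fun ρ hρ => by
    have hρ0 : ENNReal.ofReal ρ ≠ 0 := by positivity
    calc _ ≤ _ := setLIntegral_dyadicAnnulus_brKernel_mul_le hαn hγ x hρ
      _ ≤ cK * ENNReal.ofReal ρ ^ (-α) * (B * ENNReal.ofReal (2 * ρ) ^ ν) :=
          mul_le_mul' (hdecay ρ hρ) (hf _ (by positivity))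
      _ = _ := by
          rw [ENNReal.ofReal_mul zero_le_two, ENNReal.ofReal_ofNat,
            ENNReal.mul_rpow_of_ne_zero two_ne_zero hρ0, sub_eq_neg_add,
            ENNReal.rpow_add _ _ hρ0 ENNReal.ofReal_ne_top]
          ring
  calc _ ≤ ∑' j : ℕ, cK * B * 2 ^ ν * ENNReal.ofReal (R * t ^ j) ^ (ν - α) :=
        ENNReal.tsum_le_tsum fun j => hterm _ (by positivity)
    _ = _ := by rw [ENNReal.tsum_mul_left, ENNReal.tsum_ofReal_mul_pow_rpow hR ht]

end Hedberg

lemma exists_lintegral_brKernel_mul_le {n : ℕ} [NeZero n] {α γ : ℝ} (hαn : α < n) (hγ : 0 ≤ γ)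
    {cK : ℝ≥0∞}
    (hdecay : ∀ r, 0 < r → ENNReal.ofReal (brRadial n α γ r) ≤ cK * ENNReal.ofReal r ^ (-α))
    {p Cφ β : ℝ} {φ : ℝ → ℝ} (hp : 1 < p) (hφ : ∀ r, 0 < r → φ r ≤ Cφ * r ^ β)
    (hβ : (n : ℝ) - α + β < 0) :
    ∃ c > 0, ∀ (f : En n → ℝ) (x : En n), gMorreyNorm n p φ f ≠ ⊤ → ∀ R, 0 < R →
      ∫⁻ y, ENNReal.ofReal (brKernel n α γ (x - y)) * ENNReal.ofReal |f y| ≤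
        ENNReal.ofReal c * cK * (maximalFn n f x * ENNReal.ofReal R ^ ((n : ℝ) - α) +
          gMorreyNorm n p φ f * ENNReal.ofReal R ^ ((n : ℝ) - α + β)) := by
  set v := volume (ball (0 : En n) 1)
  have hv : v ≠ ⊤ := measure_ball_lt_top.ne
  have hq₁ : ENNReal.ofReal 2⁻¹ ^ ((n : ℝ) - α) < 1 :=
    ENNReal.rpow_lt_one (by norm_num) (by linarith)
  have hq₂ : ENNReal.ofReal 2 ^ ((n : ℝ) - α + β) < 1 :=
    ENNReal.rpow_lt_one_of_one_lt_of_neg (by norm_num) hβ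
  set c₁ := v * 2 ^ (n : ℝ) * ENNReal.ofReal 2⁻¹ ^ ((n : ℝ) - α) *
    (1 - ENNReal.ofReal 2⁻¹ ^ ((n : ℝ) - α))⁻¹
  set c₂ := ENNReal.ofReal Cφ * v ^ (1 - 1 / p) * 2 ^ ((n : ℝ) + β) *
    (1 - ENNReal.ofReal 2 ^ ((n : ℝ) - α + β))⁻¹
  have hc₁ : c₁ ≠ 0 := by
    have : v ≠ 0 := (measure_ball_pos _ _ one_pos).ne'
    simp [c₁, this]
  have hc : c₁ + c₂ ≠ ⊤ := by
    have h₁ := ENNReal.inv_ne_top.mpr (tsub_pos_of_lt hq₁).ne'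
    have h₂ := ENNReal.inv_ne_top.mpr (tsub_pos_of_lt hq₂).ne'
    have h₃ : v ^ (1 - 1 / p) ≠ ⊤ := ENNReal.rpow_ne_top_of_nonneg (by
      rw [sub_nonneg, div_le_one (by linarith)]; exact hp.le) hv
    simp only [c₁, c₂]
    finiteness
  refine ⟨(c₁ + c₂).toReal, ENNReal.toReal_pos (by simp [hc₁]) hc, fun f x hf R hR => ?_⟩
  set M := maximalFn n f x
  set A := gMorreyNorm n p φ f
  have hnear := tsum_setLIntegral_dyadicAnnulus_brKernel_mul_le hαn.le hγ hdecay x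
    (B := M * v) (ν := n)
    (fun r hr => (setLIntegral_abs_le_maximalFn_mul x hr).trans_eq
      (by rw [volume_ball_eq_rpow_mul x hr]; ring)) (mul_pos hR (inv_pos.mpr two_pos))
    (inv_pos.mpr two_pos)
  have hfar := tsum_setLIntegral_dyadicAnnulus_brKernel_mul_le hαn.le hγ hdecay x
    (fun r hr => setLIntegral_abs_le_gMorreyNorm hp hf hφ x hr) hR two_pos
  rw [show (n : ℝ) + β - α = n - α + β by ring] at hfar
  rw [ENNReal.ofReal_toReal hc]
  calc _ ≤ _ := lintegral_le_tsum_dyadicAnnulus volume _ x hR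
    _ ≤ _ := add_le_add hfar hnear
    _ = cK * (c₁ * (M * ENNReal.ofReal R ^ ((n : ℝ) - α)) +
          c₂ * (A * ENNReal.ofReal R ^ ((n : ℝ) - α + β))) := by
        rw [ENNReal.ofReal_mul hR.le, ENNReal.mul_rpow_of_nonneg _ _ (by linarith)]
        ring
    _ ≤ _ := by
        rw [mul_comm _ cK, mul_assoc cK, add_mul]
        gcongr
        · exact le_self_add
        · exact le_add_self

lemma ofReal_abs_brOp_le_lintegral {n : ℕ} {α γ : ℝ} (f : En n → ℝ) (x : En n) :
    ENNReal.ofReal |brOp n α γ f x| ≤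
      ∫⁻ y, ENNReal.ofReal (brKernel n α γ (x - y)) * ENNReal.ofReal |f y| := by
  rw [← Real.enorm_eq_ofReal_abs]
  refine (enorm_integral_le_lintegral_enorm _).trans (lintegral_mono fun y => ?_)
  rw [Real.enorm_eq_ofReal_abs, abs_mul, abs_of_nonneg (brKernel_nonneg _),
    ENNReal.ofReal_mul (brKernel_nonneg _)]

/-- The choice `R = (M/A)^{1/β}` balances the two terms. -/
lemma exists_mul_rpow_add_mul_rpow_le {M A : ℝ≥0∞} (hM : M ≠ 0) (hA₀ : A ≠ 0) (hA : A ≠ ⊤)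
    {κ β : ℝ} (hβ : β ≠ 0) (hκβ : 0 < 1 + κ / β) :
    ∃ R > 0, M * ENNReal.ofReal R ^ κ + A * ENNReal.ofReal R ^ (κ + β) ≤
      2 * (A ^ (-(κ / β)) * M ^ (1 + κ / β)) := by
  by_cases hMt : M = ⊤
  · refine ⟨1, one_pos, le_top.trans_eq ?_⟩
    rw [hMt, ENNReal.top_rpow_of_pos hκβ,
      ENNReal.mul_top (ENNReal.rpow_pos (pos_iff_ne_zero.mpr hA₀) hA).ne',
      ENNReal.mul_top two_ne_zero]
  set X := (M / A) ^ (1 / β)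
  have hMA₀ : M / A ≠ 0 := ENNReal.div_ne_zero.mpr ⟨hM, hA⟩
  have hMA : M / A ≠ ⊤ := ENNReal.div_ne_top hMt hA₀
  have hX₀ : X ≠ 0 := (ENNReal.rpow_pos (pos_iff_ne_zero.mpr hMA₀) hMA).ne'
  have hX : X ≠ ⊤ := ENNReal.rpow_ne_top_of_ne_zero hMA₀ hMA
  refine ⟨X.toReal, ENNReal.toReal_pos hX₀ hX, le_of_eq ?_⟩
  have hXβ : X ^ β = M / A := by
    rw [← ENNReal.rpow_mul, one_div_mul_cancel hβ, ENNReal.rpow_one]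
  have hXκ : M * X ^ κ = A ^ (-(κ / β)) * M ^ (1 + κ / β) := by
    rw [← ENNReal.rpow_mul, one_div_mul_eq_div, div_eq_mul_inv M,
      ENNReal.mul_rpow_of_ne_top hMt (ENNReal.inv_ne_top.mpr hA₀), ENNReal.inv_rpow,
      ← ENNReal.rpow_neg, ENNReal.rpow_add _ _ hM hMt, ENNReal.rpow_one]
    ring
  rw [ENNReal.ofReal_toReal hX, ENNReal.rpow_add _ _ hX₀ hX, hXβ, two_mul, ← hXκ,
    mul_comm (X ^ κ), ← mul_assoc, ENNReal.mul_div_cancel hA₀ hA]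

theorem besselRiesz_hedberg_gKernel_general (n : ℕ) (hn : 1 ≤ n)
    (α γ s p₁ β Cσ Cφ : ℝ) (σ φ : ℝ → ℝ)
    (hαn : α < n) (hγ : 0 < γ)
    (hs1 : 1 ≤ s)
    (hCσ : 0 < Cσ) (hσ : ∀ r, 0 < r → σ r ≤ Cσ * r ^ (-α))
    (hK : gMorreyNorm n s σ (brKernel n α γ) < ⊤)
    (hp1 : 1 < p₁)
    (hβ2 : β < -α)
    (hφ : ∀ r, 0 < r → φ r ≤ Cφ * r ^ β) :
    ∃ C' > (0 : ℝ), ∀ f : En n → ℝ, ∀ x : En n,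
      gMorreyNorm n p₁ φ f < ⊤ → 0 < gMorreyNorm n p₁ φ f → 0 < maximalFn n f x →
        ENNReal.ofReal |brOp n α γ f x| ≤
          ENNReal.ofReal C' * gMorreyNorm n s σ (brKernel n α γ) *
            (gMorreyNorm n p₁ φ f) ^ ((α - n) / β) *
            (maximalFn n f x) ^ (1 + ((n : ℝ) - α) / β) := by
  have : NeZero n := NeZero.of_pos hn
  have hs : 0 < s := by linarith
  obtain ⟨e, he, hdecay⟩ := exists_ofReal_brRadial_le hs hαn.le hγ.le hCσ hσ hK.ne
  have h2α := natCast_le_two_mul_of_gMorreyNorm_brKernel_ne_top hs hαn.le hγ.le hCσ hσ hK.ne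
  have hβ : (n : ℝ) - α + β < 0 := by linarith
  have hβ0 : β < 0 := by linarith
  have hκβ : 0 < 1 + ((n : ℝ) - α) / β := by
    rw [one_add_div hβ0.ne]; exact div_pos_of_neg_of_neg (by linarith) hβ0
  obtain ⟨c, hc, hbound⟩ := exists_lintegral_brKernel_mul_le hαn hγ.le hdecay hp1 hφ hβ
  refine ⟨2 * c * e, by positivity, fun f x hf hf₀ hM₀ => ?_⟩
  obtain ⟨R, hR, hbal⟩ := exists_mul_rpow_add_mul_rpow_le hM₀.ne' hf₀.ne' hf.ne hβ0.ne hκβ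
  rw [show (α - n) / β = -(((n : ℝ) - α) / β) by ring]
  calc _ ≤ _ := ofReal_abs_brOp_le_lintegral f x
    _ ≤ _ := hbound f x hf.ne R hR
    _ ≤ ENNReal.ofReal c * (ENNReal.ofReal e * gMorreyNorm n s σ (brKernel n α γ)) *
          (2 * (gMorreyNorm n p₁ φ f ^ (-(((n : ℝ) - α) / β)) *
            maximalFn n f x ^ (1 + ((n : ℝ) - α) / β))) := by gcongr
    _ = _ := by rw [ENNReal.ofReal_mul (by positivity), ENNReal.ofReal_mul zero_le_two,
          ENNReal.ofReal_ofNat]; ring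

/-- Hedberg-type inequality with the generalized Morrey norm of
the kernel. -/
theorem besselRiesz_hedberg_gKernel (n : ℕ) (hn : 1 ≤ n)
    (α γ s p₁ β Cσ Cφ : ℝ) (σ φ : ℝ → ℝ)
    (hα0 : 0 < α) (hαn : α < n) (hγ : 0 < γ)
    (hs1 : 1 ≤ s) (hs2 : s < (n : ℝ) / ((n : ℝ) - α))
    (hσdbl : ∃ Cd > (0 : ℝ), ∀ r v : ℝ, 0 < v → 1 / 2 ≤ r / v → r / v ≤ 2 →
      Cd⁻¹ ≤ σ r / σ v ∧ σ r / σ v ≤ Cd)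
    (hCσ : 0 < Cσ) (hσ : ∀ r, 0 < r → σ r ≤ Cσ * r ^ (-α))
    (hK : gMorreyNorm n s σ (brKernel n α γ) < ⊤)
    (hp1 : 1 < p₁) (hp2 : p₁ < (n : ℝ) / α)
    (hβ1 : -(n : ℝ) / p₁ < β) (hβ2 : β < -α)
    (hCφ : 0 < Cφ) (hφ : ∀ r, 0 < r → φ r ≤ Cφ * r ^ β) :
    ∃ C' > (0 : ℝ), ∀ f : En n → ℝ, ∀ x : En n,
      gMorreyNorm n p₁ φ f < ⊤ → 0 < gMorreyNorm n p₁ φ f → 0 < maximalFn n f x →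
        ENNReal.ofReal |brOp n α γ f x| ≤
          ENNReal.ofReal C' * gMorreyNorm n s σ (brKernel n α γ) *
            (gMorreyNorm n p₁ φ f) ^ ((α - n) / β) *
            (maximalFn n f x) ^ (1 + ((n : ℝ) - α) / β) :=
  besselRiesz_hedberg_gKernel_general n hn α γ s p₁ β Cσ Cφ σ φ hαn hγ hs1 hCσ hσ hK hp1 hβ2 hφ
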